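/- Let A be a groupoid, let F and G be strict automorphisms of A, and let ρ : F ⟹ G be a natural transformation. Then for every natural transformation σ : 𝟭_A ⟹ 𝟭_A and every object a of A: F(σ(F⁻¹(a))) = G(σ(G⁻¹(a))) as automorphisms of a. (That is, conjugation of natural endomorphisms of the identity functor by a strict automorphism depends only on the natural-isomorphism class of that automorphism.) -/
import Mathlib


/-!
Statement 13: Let `F, G` be strict automorphisms of a groupoid `A` and
`ρ : F ⟹ G` a natural transformation. Then for every natural transformation
`σ : 𝟭_A ⟹ 𝟭_A` and every object `a`, `F(σ(F⁻¹(a))) = G(σ(G⁻¹(a)))` as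
automorphisms of `a`.
-/

open CategoryTheory

universe v u

structure GrpdAut (A : Type u) [Groupoid A] where
  F : A ⥤ A
  inv : A ⥤ A
  comp_inv : F ⋙ inv = 𝟭 A
  inv_comp : inv ⋙ F = 𝟭 A

variable {A : Type u} [Groupoid A]

@[simp]
theorem GrpdAut.F_inv_obj (f : GrpdAut A) (a : A) : f.F.obj (f.inv.obj a) = a :=
  Functor.congr_obj f.inv_comp a

@[simp]
theorem GrpdAut.inv_F_obj (f : GrpdAut A) (a : A) : f.inv.obj (f.F.obj a) = a :=
  Functor.congr_obj f.comp_inv a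

/-- If `ρ : F ⟹ G` is a natural transformation between strict
automorphisms, then for every `σ : 𝟭_A ⟹ 𝟭_A` and every object `a`,
`F(σ(F⁻¹(a))) = G(σ(G⁻¹(a)))` as automorphisms of `a` (both sides conjugated into
`Hom(a,a)` by the strict identifications, recorded by `eqToHom`): conjugation of
natural endomorphisms of the identity depends only on the natural-isomorphism class
of the strict automorphism. -/
theorem conj_eq_of_natTrans (A : Type u) [Groupoid A]
    (F G : GrpdAut A) (ρ : F.F ⟶ G.F) :
    ∀ (σ : 𝟭 A ⟶ 𝟭 A) (a : A),
      eqToHom (show a = F.F.obj (F.inv.obj a) by simp) ≫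
          F.F.map (σ.app (F.inv.obj a)) ≫
          eqToHom (show F.F.obj (F.inv.obj a) = a by simp) =
        eqToHom (show a = G.F.obj (G.inv.obj a) by simp) ≫
          G.F.map (σ.app (G.inv.obj a)) ≫
          eqToHom (show G.F.obj (G.inv.obj a) = a by simp) := by
  intro σ a
  -- `h : G⁻¹(a) ⟶ F⁻¹(a)` built from `ρ` at `F⁻¹(a)`
  let k : a ⟶ G.F.obj (F.inv.obj a) :=
    eqToHom (F.F_inv_obj a).symm ≫ ρ.app (F.inv.obj a)
  let h : G.inv.obj a ⟶ F.inv.obj a :=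
    G.inv.map k ≫ eqToHom (G.inv_F_obj (F.inv.obj a))
  -- naturality of σ along h
  have hσ : σ.app (G.inv.obj a) ≫ h = h ≫ σ.app (F.inv.obj a) := by
    simpa using (σ.naturality h).symm
  -- naturality of ρ at σ (F⁻¹ a)
  have hρ : F.F.map (σ.app (F.inv.obj a)) ≫ ρ.app (F.inv.obj a)
      = ρ.app (F.inv.obj a) ≫ G.F.map (σ.app (F.inv.obj a)) :=
    ρ.naturality _
  -- compute G(h)
  have hGh : G.F.map h = eqToHom (G.F_inv_obj a) ≫ k := by
    show G.F.map (G.inv.map k ≫ eqToHom _) = _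
    rw [Functor.map_comp, eqToHom_map]
    have hk := Functor.congr_hom G.inv_comp k
    simp only [Functor.comp_map, Functor.id_map] at hk
    rw [hk]
    simp
  have key : G.F.map (σ.app (G.inv.obj a)) ≫ G.F.map h
      = G.F.map h ≫ G.F.map (σ.app (F.inv.obj a)) := by
    rw [← Functor.map_comp, ← Functor.map_comp, hσ]
  have hki : ∀ (b : A) (e : b ⟶ a), (e ≫ k) ≫ inv k = e := by
    intro b e
    simp
  calc eqToHom (show a = F.F.obj (F.inv.obj a) by simp) ≫
          F.F.map (σ.app (F.inv.obj a)) ≫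
          eqToHom (show F.F.obj (F.inv.obj a) = a by simp)
      = eqToHom (show a = G.F.obj (G.inv.obj a) by simp) ≫
          (G.F.map (σ.app (G.inv.obj a)) ≫ G.F.map h) ≫ inv k := by
        rw [key, hGh]
        simp only [k, Category.assoc, eqToHom_trans_assoc, eqToHom_refl,
          Category.id_comp, IsIso.inv_comp, inv_eqToHom]
        rw [← reassoc_of% hρ]
        simp
    _ = eqToHom (show a = G.F.obj (G.inv.obj a) by simp) ≫
          G.F.map (σ.app (G.inv.obj a)) ≫
          eqToHom (show G.F.obj (G.inv.obj a) = a by simp) := by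
        rw [hGh]
        simp
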